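/- arXiv:2506.22898 — 4 statements merged into one kernel-verified Lean document; each statement's English description precedes it below -/
import Mathlib

section
/- Let Δ be an abstract simplicial complex on a finite vertex set whose Stanley–Reisner ideal is generated by k+1 pairwise-disjoint squarefree monomials D_0, D_1, ..., D_k (i.e., the facets of Δ are exactly the complements of sets {v_0,...,v_k} with v_i ∈ D_i). Then Δ is shellable: ordering facets lexicographically via any fixed total orders on each D_i yields a shelling. -/
/-!
A facet of the complex is the complement of a transversal `v` of the `D i` (a choice `v i ∈ D i`).
Since the `D i` are disjoint, a transversal is injective and is determined by its image, so all
facets have `|S| - (k + 1)` elements. Order the transversals lexicographically. If `v < w`,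
then `v m < w m` at some index `m`, and replacing `w m` by `v m` gives a transversal `u < w`
whose facet differs from that of `w` only in the vertex `v m`, which also lies in
`facet w \ facet v`.
-/

open Finset Function

namespace TransversalComplex

variable {ι S : Type*}

def IsFace (D : ι → Finset S) (F : Finset S) : Prop := ∀ i, ¬ D i ⊆ F

def IsFacet (D : ι → Finset S) (F : Finset S) : Prop :=
  IsFace D F ∧ ∀ G, IsFace D G → F ⊆ G → F = G

section

variable [DecidableEq S]

def IsShelling (L : List (Finset S)) : Prop :=
  ∀ i j : ℕ, ∀ hij : i < j, ∀ hj : j < L.length,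
    ∃ v ∈ L.get ⟨j, hj⟩ \ L.get ⟨i, lt_trans hij hj⟩,
      ∃ t : ℕ, ∃ ht : t < j, L.get ⟨j, hj⟩ \ L.get ⟨t, lt_trans ht hj⟩ = {v}

theorem isShelling_map_sort {α : Type*} [LinearOrder α] (s : Finset α) (f : α → Finset S)
    (hexch : ∀ v ∈ s, ∀ w ∈ s, v < w →
      ∃ a ∈ f w \ f v, ∃ u ∈ s, u < w ∧ f w \ f u = {a}) :
    IsShelling ((s.sort (· ≤ ·)).map f) := by
  intro i j hij hj
  set l := s.sort (· ≤ ·)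
  have hsorted : l.SortedLT := s.sortedLT_sort
  have hj' : j < l.length := by simpa using hj
  have hi' : i < l.length := hij.trans hj'
  have hlt : l[i] < l[j] := (hsorted.getElem_lt_getElem_iff (hi := hi') (hj := hj')).mpr hij
  have hmem {x} : x ∈ l ↔ x ∈ s := s.mem_sort _
  obtain ⟨a, ha, u, hu, hujl, hua⟩ :=
    hexch _ (hmem.mp (l.getElem_mem hi')) _ (hmem.mp (l.getElem_mem hj')) hlt
  obtain ⟨t, ht, rfl⟩ := List.getElem_of_mem (hmem.mpr hu)
  have htj : t < j := hsorted.getElem_lt_getElem_iff.mp hujl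
  exact ⟨a, by simpa using ha, t, htj, by simpa using hua⟩

def facet [Fintype ι] [Fintype S] (v : ι → S) : Finset S := (univ.image v)ᶜ

theorem facet_sdiff_facet [Fintype ι] [Fintype S] (v w : ι → S) :
    facet w \ facet v = univ.image v \ univ.image w :=
  compl_sdiff_compl

section

variable [Fintype ι] [DecidableEq ι] {D : ι → Finset S}

theorem mem_image_iff_eq (hD : Pairwise (Disjoint on D)) {v : ι → S}
    (hv : v ∈ Fintype.piFinset D) {i : ι} {x : S} (hx : x ∈ D i) :
    x ∈ univ.image v ↔ x = v i := by
  rw [Fintype.mem_piFinset] at hv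
  refine ⟨?_, fun h => h ▸ mem_image_of_mem v (mem_univ i)⟩
  simp only [mem_image, mem_univ, true_and]
  rintro ⟨j, rfl⟩
  by_contra hji
  exact disjoint_left.mp (hD fun hij => hji (by rw [hij])) (hv j) hx

variable [Fintype S]

theorem isFace_facet {v : ι → S} (hv : v ∈ Fintype.piFinset D) : IsFace D (facet v) :=
  fun i hi => mem_compl.mp (hi (Fintype.mem_piFinset.mp hv i)) (mem_image_of_mem v (mem_univ i))

theorem exists_subset_facet {F : Finset S} (hF : IsFace D F) :
    ∃ v ∈ Fintype.piFinset D, F ⊆ facet v := by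
  choose v hvD hvF using fun i => not_subset.mp (hF i)
  refine ⟨v, Fintype.mem_piFinset.mpr hvD, fun x hx => mem_compl.mpr ?_⟩
  simp only [mem_image, mem_univ, true_and, not_exists]
  rintro i rfl
  exact hvF i hx

theorem isFacet_facet (hD : Pairwise (Disjoint on D)) {v : ι → S}
    (hv : v ∈ Fintype.piFinset D) : IsFacet D (facet v) := by
  refine ⟨isFace_facet hv, fun G hG hvG => hvG.antisymm fun x hxG => ?_⟩
  by_contra hx
  rw [facet, mem_compl, not_not] at hx
  obtain ⟨i, -, rfl⟩ := mem_image.mp hx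
  refine hG i fun y hy => ?_
  by_cases hyv : y = v i
  · exact hyv ▸ hxG
  · exact hvG (mem_compl.mpr fun h => hyv ((mem_image_iff_eq hD hv hy).mp h))

theorem isFacet_iff (hD : Pairwise (Disjoint on D)) {F : Finset S} :
    IsFacet D F ↔ ∃ v ∈ Fintype.piFinset D, facet v = F := by
  refine ⟨fun hF => ?_, fun ⟨v, hv, hvF⟩ => hvF ▸ isFacet_facet hD hv⟩
  obtain ⟨v, hv, hFv⟩ := exists_subset_facet hF.1
  exact ⟨v, hv, (hF.2 _ (isFace_facet hv) hFv).symm⟩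

theorem facet_injOn (hD : Pairwise (Disjoint on D)) :
    Set.InjOn facet (Fintype.piFinset D : Set (ι → S)) := by
  intro v hv w hw hvw
  have himage : univ.image v = univ.image w := compl_injective hvw
  funext i
  exact (mem_image_iff_eq hD hw (Fintype.mem_piFinset.mp hv i)).mp
    (himage ▸ mem_image_of_mem v (mem_univ i))

theorem card_facet (hD : Pairwise (Disjoint on D)) {v : ι → S}
    (hv : v ∈ Fintype.piFinset D) : #(facet v) = Fintype.card S - Fintype.card ι := by
  have hinj : Injective v := fun i j hij => by
    by_contra hne
    refine disjoint_left.mp (hD hne) (Fintype.mem_piFinset.mp hv i) ?_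
    rw [hij]
    exact Fintype.mem_piFinset.mp hv j
  rw [facet, card_compl, card_image_of_injective _ hinj, card_univ]

theorem facet_sdiff_facet_update (hD : Pairwise (Disjoint on D)) {w : ι → S}
    (hw : w ∈ Fintype.piFinset D) {m : ι} {a : S} (ha : a ∈ D m) (haw : a ≠ w m) :
    facet w \ facet (update w m a) = {a} := by
  rw [facet_sdiff_facet]
  ext x
  simp only [mem_sdiff, mem_singleton]
  constructor
  · rintro ⟨hxu, hxw⟩
    obtain ⟨l, -, rfl⟩ := mem_image.mp hxu
    rcases eq_or_ne l m with rfl | hlm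
    · exact update_self _ _ _
    · exact absurd (update_of_ne hlm a w ▸ mem_image_of_mem w (mem_univ l)) hxw
  · rintro rfl
    exact ⟨mem_image.mpr ⟨m, mem_univ m, update_self m x w⟩,
      fun h => haw ((mem_image_iff_eq hD hw ha).mp h)⟩

end

section

variable [Fintype ι] [LinearOrder ι] [Fintype S] [LinearOrder S] {D : ι → Finset S}

theorem exists_facet_sdiff_eq_singleton (hD : Pairwise (Disjoint on D)) {v w : ι → S}
    (hv : v ∈ Fintype.piFinset D) (hw : w ∈ Fintype.piFinset D) (hvw : toLex v < toLex w) :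
    ∃ a ∈ facet w \ facet v, ∃ u ∈ Fintype.piFinset D,
      toLex u < toLex w ∧ facet w \ facet u = {a} := by
  obtain ⟨m, -, hm⟩ := hvw
  have hvm : v m ∈ D m := Fintype.mem_piFinset.mp hv m
  refine ⟨v m, ?_, update w m (v m), ?_, Pi.toLex_update_lt_self_iff.mpr hm,
    facet_sdiff_facet_update hD hw hvm hm.ne⟩
  · rw [facet_sdiff_facet, mem_sdiff, mem_image_iff_eq hD hw hvm]
    exact ⟨mem_image_of_mem v (mem_univ m), hm.ne⟩
  · rw [Fintype.mem_piFinset] at hw ⊢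
    exact (forall_update_iff w fun i x => x ∈ D i).mpr ⟨hvm, fun i _ => hw i⟩

noncomputable def lexFacets (D : ι → Finset S) : List (Finset S) :=
  (((Fintype.piFinset D).map toLex.toEmbedding).sort (· ≤ ·)).map (facet ∘ ofLex)

theorem mem_lexFacets {F : Finset S} :
    F ∈ lexFacets D ↔ ∃ v ∈ Fintype.piFinset D, facet v = F := by
  simp only [lexFacets, List.mem_map, mem_sort, mem_map_equiv, comp_apply]
  exact ⟨fun ⟨v, hv, h⟩ => ⟨_, hv, h⟩, fun ⟨v, hv, h⟩ => ⟨toLex v, hv, h⟩⟩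

theorem nodup_lexFacets (hD : Pairwise (Disjoint on D)) : (lexFacets D).Nodup :=
  (sort_nodup _ _).map_on fun _ hv _ hw h =>
    facet_injOn hD (mem_map_equiv.mp ((mem_sort _).mp hv))
      (mem_map_equiv.mp ((mem_sort _).mp hw)) h

theorem isShelling_lexFacets (hD : Pairwise (Disjoint on D)) : IsShelling (lexFacets D) :=
  isShelling_map_sort _ _ fun v hv w hw hvw => by
    obtain ⟨a, ha, u, hu, huw, hua⟩ := exists_facet_sdiff_eq_singleton hD
      (mem_map_equiv.mp hv) (mem_map_equiv.mp hw) hvw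
    exact ⟨a, ha, toLex u, mem_map_equiv.mpr hu, huw, hua⟩

end

end

end TransversalComplex

open TransversalComplex in
theorem stmt_11_general {S : Type*} [Fintype S] [DecidableEq S] (k : ℕ)
    (D : Fin (k + 1) → Finset S)
    (hdisj : ∀ i j, i ≠ j → Disjoint (D i) (D j)) :
    ∃ L : List (Finset S),
      L.Nodup ∧
      -- `L` enumerates exactly the facets (maximal faces) of the complex
      -- whose faces are the sets containing no `D i`
      (∀ F : Finset S, F ∈ L ↔
        ((∀ i, ¬ D i ⊆ F) ∧ ∀ G : Finset S, (∀ i, ¬ D i ⊆ G) → F ⊆ G → F = G)) ∧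
      -- all facets have the same dimension
      (∀ F ∈ L, ∀ G ∈ L, F.card = G.card) ∧
      -- the shelling condition
      (∀ i j : ℕ, ∀ hij : i < j, ∀ hj : j < L.length,
        ∃ v ∈ L.get ⟨j, hj⟩ \ L.get ⟨i, lt_trans hij hj⟩,
          ∃ t : ℕ, ∃ ht : t < j, L.get ⟨j, hj⟩ \ L.get ⟨t, lt_trans ht hj⟩ = {v}) := by
  let _ : LinearOrder S := LinearOrder.lift' (Fintype.equivFin S) (Fintype.equivFin S).injective
  have hD : Pairwise (Disjoint on D) := hdisj
  refine ⟨lexFacets D, nodup_lexFacets hD, fun F => mem_lexFacets.trans (isFacet_iff hD).symm,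
    ?_, isShelling_lexFacets hD⟩
  simp only [mem_lexFacets]
  rintro _ ⟨v, hv, rfl⟩ _ ⟨w, hw, rfl⟩
  rw [card_facet hD hv, card_facet hD hw]

theorem stmt_11 {S : Type*} [Fintype S] [DecidableEq S] (k : ℕ)
    (D : Fin (k + 1) → Finset S)
    (hne : ∀ i, (D i).Nonempty)
    (hdisj : ∀ i j, i ≠ j → Disjoint (D i) (D j)) :
    ∃ L : List (Finset S),
      L.Nodup ∧
      -- `L` enumerates exactly the facets (maximal faces) of the complex
      -- whose faces are the sets containing no `D i`
      (∀ F : Finset S, F ∈ L ↔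
        ((∀ i, ¬ D i ⊆ F) ∧ ∀ G : Finset S, (∀ i, ¬ D i ⊆ G) → F ⊆ G → F = G)) ∧
      -- all facets have the same dimension
      (∀ F ∈ L, ∀ G ∈ L, F.card = G.card) ∧
      -- the shelling condition
      (∀ i j : ℕ, ∀ hij : i < j, ∀ hj : j < L.length,
        ∃ v ∈ L.get ⟨j, hj⟩ \ L.get ⟨i, lt_trans hij hj⟩,
          ∃ t : ℕ, ∃ ht : t < j, L.get ⟨j, hj⟩ \ L.get ⟨t, lt_trans ht hj⟩ = {v}) :=
  stmt_11_general k D hdisj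
end

section
/- Let Δ be the simplicial complex on vertex set S with pairwise disjoint minimal non-faces D_0,...,D_k where |D_i| = m for all i. With the shelling of facets ordered lexicographically by the positions of the removed vertices (v_0,...,v_k) with v_i ∈ D_i, the restriction set c(F) of a facet F with removed vertices at positions a_0,...,a_i (0-indexed within each D_i) has cardinality a_0 + a_1 + ... + a_k. Consequently the shelling h-polynomial ∑_F z^{|c(F)|} equals (1 + z + ... + z^{m-1})^{k+1}. -/
open Finset in
lemma aux_rank_sum {S : Type*} [LinearOrder S] (s : Finset S) (m : ℕ) (h : s.card = m)
    {M : Type*} [AddCommMonoid M] (g : ℕ → M) :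
    ∑ x : {x // x ∈ s}, g ((s.filter (· < x.1)).card) = ∑ j ∈ Finset.range m, g j := by
  classical
  set e := s.orderIsoOfFin h with he
  have hcardj : ∀ j : Fin m, (s.filter (· < (e j : S))).card = j := by
    intro j
    have himg : s.filter (· < (e j : S)) = (Finset.Iio j).image (fun i => (e i : S)) := by
      ext y
      simp only [Finset.mem_filter, Finset.mem_image, Finset.mem_Iio]
      constructor
      · rintro ⟨hy, hlt⟩
        refine ⟨e.symm ⟨y, hy⟩, ?_, by simp⟩
        rw [← OrderIso.lt_iff_lt e, OrderIso.apply_symm_apply]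
        exact Subtype.coe_lt_coe.mp (by simpa using hlt)
      · rintro ⟨i, hij, rfl⟩
        exact ⟨(e i).2, Subtype.coe_lt_coe.mpr (e.lt_iff_lt.mpr hij)⟩
    have hinj : Function.Injective (fun i : Fin m => (e i : S)) := by
      intro a b hab
      exact e.injective (Subtype.ext hab)
    rw [himg, Finset.card_image_of_injective _ hinj, Fin.card_Iio]
  calc ∑ x : {x // x ∈ s}, g ((s.filter (· < x.1)).card)
      = ∑ j : Fin m, g ((s.filter (· < (e j : S))).card) :=
        (Fintype.sum_equiv e.toEquiv _ _ (fun j => rfl)).symm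
    _ = ∑ j : Fin m, g j := by simp [hcardj]
    _ = ∑ j ∈ Finset.range m, g j := Fin.sum_univ_eq_sum_range g m

open Classical in
theorem stmt_12 {S : Type*} [Fintype S] [LinearOrder S] (k m : ℕ) (hm : 1 ≤ m)
    (D : Fin (k + 1) → Finset S)
    (hdisj : ∀ i j, i ≠ j → Disjoint (D i) (D j))
    (hcard : ∀ i, (D i).card = m)
    -- each facet is the complement of a transversal `v` of `D₀, …, D_k`
    (F : {v : Fin (k + 1) → S // ∀ i, v i ∈ D i} → Finset S)
    (hF : F = fun v => Finset.univ \ Finset.image v.1 Finset.univ)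
    -- the restriction set of a facet, for the lexicographic shelling order
    (c : {v : Fin (k + 1) → S // ∀ i, v i ∈ D i} → Finset S)
    (hc : c = fun v => (F v).filter fun x =>
      ∃ w : {v : Fin (k + 1) → S // ∀ i, v i ∈ D i},
        Pi.Lex (· < ·) (s := fun {_} => (· < ·)) w.1 v.1 ∧ F v \ F w = {x}) :
    (∀ v, (c v).card = ∑ i, ((D i).filter (· < v.1 i)).card) ∧
      ∑ v : {v : Fin (k + 1) → S // ∀ i, v i ∈ D i},
          (Polynomial.X : Polynomial ℤ) ^ (c v).card
        = (∑ j ∈ Finset.range m, (Polynomial.X : Polynomial ℤ) ^ j) ^ (k + 1) := by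
  classical
  subst hF hc
  -- if `v.1 i` lands in `D j` then `i = j`
  have hmemD : ∀ (v : {v : Fin (k + 1) → S // ∀ i, v i ∈ D i}) i j, v.1 i ∈ D j → i = j := by
    intro v i j h
    by_contra hne
    exact Finset.disjoint_left.mp (hdisj i j hne) (v.2 i) h
  -- the restriction set equals the union of initial segments
  have hcv : ∀ v : {v : Fin (k + 1) → S // ∀ i, v i ∈ D i},
      ((Finset.univ \ Finset.image v.1 Finset.univ).filter fun x =>
        ∃ w : {v : Fin (k + 1) → S // ∀ i, v i ∈ D i},
          Pi.Lex (· < ·) (s := fun {_} => (· < ·)) w.1 v.1 ∧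
          (Finset.univ \ Finset.image v.1 Finset.univ) \
            (Finset.univ \ Finset.image w.1 Finset.univ) = {x})
      = Finset.univ.biUnion fun i => (D i).filter (· < v.1 i) := by
    intro v
    ext x
    rw [Finset.mem_filter, Finset.mem_biUnion]
    constructor
    · rintro ⟨hxA, w, hlex, hw⟩
      obtain ⟨i0, h0, hlt⟩ := hlex
      have hwim : w.1 i0 ∉ Finset.image v.1 Finset.univ := by
        intro h
        obtain ⟨j, -, hj⟩ := Finset.mem_image.mp h
        have hji : j = i0 := hmemD v j i0 (hj ▸ w.2 i0)
        subst hji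
        rw [hj] at hlt
        exact lt_irrefl _ hlt
      have hmem : w.1 i0 ∈ (Finset.univ \ Finset.image v.1 Finset.univ) \
          (Finset.univ \ Finset.image w.1 Finset.univ) :=
        Finset.mem_sdiff.mpr ⟨Finset.mem_sdiff.mpr ⟨Finset.mem_univ _, hwim⟩,
          fun hb => (Finset.mem_sdiff.mp hb).2
            (Finset.mem_image_of_mem w.1 (Finset.mem_univ i0))⟩
      rw [hw, Finset.mem_singleton] at hmem
      exact ⟨i0, Finset.mem_univ _, Finset.mem_filter.mpr ⟨hmem ▸ w.2 i0, hmem ▸ hlt⟩⟩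
    · rintro ⟨i, -, hx⟩
      obtain ⟨hxD, hxlt⟩ := Finset.mem_filter.mp hx
      have hxnv : x ∉ Finset.image v.1 Finset.univ := by
        intro h
        obtain ⟨j, -, hj⟩ := Finset.mem_image.mp h
        have hji : j = i := hmemD v j i (hj ▸ hxD)
        subst hji
        rw [hj] at hxlt
        exact lt_irrefl _ hxlt
      refine ⟨Finset.mem_sdiff.mpr ⟨Finset.mem_univ _, hxnv⟩,
        ⟨fun j => if j = i then x else v.1 j, fun j => ?_⟩,
        ⟨i, fun j hj => if_neg (ne_of_lt hj), by simpa using hxlt⟩, ?_⟩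
      · by_cases hji : j = i
        · subst hji; simpa using hxD
        · simpa [hji] using v.2 j
      · ext y
        rw [Finset.mem_singleton]
        constructor
        · intro hy
          obtain ⟨hy1, hy2⟩ := Finset.mem_sdiff.mp hy
          have hynv : y ∉ Finset.image v.1 Finset.univ := (Finset.mem_sdiff.mp hy1).2
          have hyw : y ∈ Finset.image (fun j => if j = i then x else v.1 j) Finset.univ := by
            by_contra hcon
            exact hy2 (Finset.mem_sdiff.mpr ⟨Finset.mem_univ _, hcon⟩)
          obtain ⟨j, -, hj⟩ := Finset.mem_image.mp hyw
          by_cases hji : j = i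
          · subst hji; simpa using hj.symm
          · rw [if_neg hji] at hj
            exact absurd (Finset.mem_image_of_mem v.1 (Finset.mem_univ j)) (hj ▸ hynv)
        · rintro rfl
          refine Finset.mem_sdiff.mpr ⟨Finset.mem_sdiff.mpr ⟨Finset.mem_univ _, hxnv⟩,
            fun hb => (Finset.mem_sdiff.mp hb).2 ?_⟩
          exact Finset.mem_image.mpr ⟨i, Finset.mem_univ i, by simp⟩
  -- cardinality statement
  have hcard1 : ∀ v : {v : Fin (k + 1) → S // ∀ i, v i ∈ D i},
      ((Finset.univ \ Finset.image v.1 Finset.univ).filter fun x =>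
        ∃ w : {v : Fin (k + 1) → S // ∀ i, v i ∈ D i},
          Pi.Lex (· < ·) (s := fun {_} => (· < ·)) w.1 v.1 ∧
          (Finset.univ \ Finset.image v.1 Finset.univ) \
            (Finset.univ \ Finset.image w.1 Finset.univ) = {x}).card
      = ∑ i, ((D i).filter (· < v.1 i)).card := by
    intro v
    rw [hcv v]
    refine Finset.card_biUnion ?_
    intro i _ j _ hij
    exact (hdisj i j hij).mono (Finset.filter_subset _ _) (Finset.filter_subset _ _)
  refine ⟨hcard1, ?_⟩
  -- the h-polynomial computation
  have hsum : ∀ v : {v : Fin (k + 1) → S // ∀ i, v i ∈ D i},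
      (Polynomial.X : Polynomial ℤ) ^
        (((Finset.univ \ Finset.image v.1 Finset.univ).filter fun x =>
        ∃ w : {v : Fin (k + 1) → S // ∀ i, v i ∈ D i},
          Pi.Lex (· < ·) (s := fun {_} => (· < ·)) w.1 v.1 ∧
          (Finset.univ \ Finset.image v.1 Finset.univ) \
            (Finset.univ \ Finset.image w.1 Finset.univ) = {x}).card)
      = ∏ i, (Polynomial.X : Polynomial ℤ) ^ ((D i).filter (· < v.1 i)).card := by
    intro v
    rw [hcard1 v, Finset.prod_pow_eq_pow_sum]
  simp only [hsum]
  let e : {v : Fin (k + 1) → S // ∀ i, v i ∈ D i} ≃ (∀ i, {x // x ∈ D i}) :=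
    { toFun := fun v i => ⟨v.1 i, v.2 i⟩
      invFun := fun f => ⟨fun i => (f i).1, fun i => (f i).2⟩
      left_inv := fun v => rfl
      right_inv := fun f => rfl }
  rw [Fintype.sum_equiv e
    (fun v => ∏ i, (Polynomial.X : Polynomial ℤ) ^ ((D i).filter (· < v.1 i)).card)
    (fun f => ∏ i, (Polynomial.X : Polynomial ℤ) ^ ((D i).filter (· < (f i).1)).card)
    (fun v => rfl)]
  rw [← Fintype.prod_sum (fun i (x : {x // x ∈ D i}) =>
    (Polynomial.X : Polynomial ℤ) ^ ((D i).filter (· < x.1)).card)]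
  have hfac : ∀ i : Fin (k + 1),
      (∑ x : {x // x ∈ D i}, (Polynomial.X : Polynomial ℤ) ^ ((D i).filter (· < x.1)).card)
      = ∑ j ∈ Finset.range m, (Polynomial.X : Polynomial ℤ) ^ j :=
    fun i => aux_rank_sum (D i) m (hcard i) _
  rw [Finset.prod_congr rfl fun i _ => hfac i, Finset.prod_const, Finset.card_univ,
    Fintype.card_fin]
end

section
/- For integers 1 < r < m ≤ n and k ≥ 0, the number of pre-partitions λ = (d,...,d,e,0,...,0) of length m with: k+1 = (a+1)d + e, 0 ≤ e < d, either (e = 0 and 0 ≤ a ≤ r−1) or (e > 0 and 0 ≤ a < r−1), and exactly a+m−r+1 copies of d, equals k + 2 − ⌈(k+1)/r⌉. -/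
theorem stmt_13 (m n r k : ℕ) (hr : 1 < r) (hrm : r < m) (hmn : m ≤ n) :
    ((Finset.range (k + 2) ×ˢ Finset.range (k + 2) ×ˢ Finset.range (k + 2)).filter
        (fun x => 1 ≤ x.1 ∧ k + 1 = (x.2.1 + 1) * x.1 + x.2.2 ∧ x.2.2 < x.1 ∧
          ((x.2.2 = 0 ∧ x.2.1 ≤ r - 1) ∨ (0 < x.2.2 ∧ x.2.1 < r - 1)))).card
      = k + 2 - (k + r) / r := by
  have hrpos : 0 < r := by omega
  set N := k + 1 with hN
  set c := (k + r) / r with hc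
  have hrc1 : r * c ≤ k + r := by
    rw [hc, mul_comm]; exact Nat.div_mul_le_self _ _
  have hrc2 : k + 1 ≤ r * c := by
    have h1 := Nat.div_add_mod (k + r) r
    have h2 := Nat.mod_lt (k + r) hrpos
    rw [← hc] at h1
    omega
  have key : ((Finset.range (k + 2) ×ˢ Finset.range (k + 2) ×ˢ Finset.range (k + 2)).filter
        (fun x => 1 ≤ x.1 ∧ k + 1 = (x.2.1 + 1) * x.1 + x.2.2 ∧ x.2.2 < x.1 ∧
          ((x.2.2 = 0 ∧ x.2.1 ≤ r - 1) ∨ (0 < x.2.2 ∧ x.2.1 < r - 1))))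
      = (Finset.Icc c N).image (fun d => (d, N / d - 1, N % d)) := by
    ext ⟨d, a, e⟩
    simp only [Finset.mem_filter, Finset.mem_product, Finset.mem_range, Finset.mem_image,
      Finset.mem_Icc, Prod.mk.injEq]
    constructor
    · rintro ⟨⟨hd2, ha2, he2⟩, hd1, heq, hed, hcond⟩
      have hdpos : 0 < d := hd1
      have hdm : N / d = a + 1 ∧ N % d = e :=
        (Nat.div_mod_unique hdpos).mpr ⟨by rw [hN, heq]; ring, hed⟩
      have hdN : d ≤ N := by
        have : 1 * d ≤ (a + 1) * d := Nat.mul_le_mul_right d (by omega)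
        omega
      have hNrd : N ≤ r * d := by
        rcases hcond with ⟨he0, har⟩ | ⟨hepos, har⟩
        · have : (a + 1) * d ≤ r * d := Nat.mul_le_mul_right d (by omega)
          omega
        · have : (a + 2) * d ≤ r * d := Nat.mul_le_mul_right d (by omega)
          have h2 : (a + 2) * d = (a + 1) * d + d := by ring
          omega
      have hcd : c ≤ d := by
        have h1 : r * c < r * (d + 1) := by
          have : r * (d + 1) = r * d + r := by ring
          omega
        have := Nat.lt_of_mul_lt_mul_left h1
        omega
      exact ⟨d, ⟨hcd, hdN⟩, rfl, by omega, by omega⟩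
    · rintro ⟨d, ⟨hcd, hdN⟩, rfl, ha, he⟩
      have hdpos : 0 < d := by
        have : 1 ≤ c := by nlinarith
        omega
      have hdam : d * (N / d) + N % d = N := Nat.div_add_mod N d
      have hmlt : N % d < d := Nat.mod_lt _ hdpos
      have hq1 : 1 ≤ N / d := (Nat.one_le_div_iff hdpos).mpr hdN
      have hNrd : N ≤ r * d := by
        have : r * c ≤ r * d := Nat.mul_le_mul_left r hcd
        omega
      have hqr : N / d ≤ r := by
        have h1 : d * (N / d) ≤ d * r := by rw [mul_comm d r]; omega
        exact Nat.le_of_mul_le_mul_left h1 hdpos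
      subst ha he
      refine ⟨⟨by omega, ?_, ?_⟩, by omega, ?_, by omega, ?_⟩
      · have := Nat.div_le_self N d; omega
      · omega
      · have : N / d - 1 + 1 = N / d := by omega
        rw [this, mul_comm]; omega
      · rcases Nat.eq_zero_or_pos (N % d) with h0 | hpos
        · left; exact ⟨h0, by omega⟩
        · right
          refine ⟨hpos, ?_⟩
          have hqlt : N / d < r := by
            have h1 : d * (N / d) < d * r := by rw [mul_comm d r]; omega
            exact Nat.lt_of_mul_lt_mul_left h1
          omega
  rw [key]
  rw [Finset.card_image_of_injOn (fun x _ y _ h => (Prod.mk.injEq _ _ _ _ ▸ h).1)]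
  rw [Nat.card_Icc]
end

section
/- Let a_1 ≤ a_2, a_1' ≥ a_2', b_1 ≤ b_2, b_1' ≥ b_2' be integers. The number of pairs of vertex-disjoint lattice paths (using unit steps in positive coordinate directions) from (a_1,a_1') to (b_1,b_1') and from (a_2,a_2') to (b_2,b_2') equals the 2×2 determinant det( C(b_j - a_i + b_j' - a_i', b_j - a_i) )_{1≤i,j≤2}. -/
/-!
Paths are counted by their first step, which turns the path count into Pascal's recurrence.
For the disjoint pairs, the product of the diagonal path counts counts all pairs of paths from
`a₁ → b₁` and `a₂ → b₂`; those that meet are put in bijection with the pairs `a₁ → b₂`, `a₂ → b₁`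
by exchanging the tails after the first point of the first path lying on the second. This is an
involution because paths never revisit a point (the level `x + y` increases along them), and
every pair `a₁ → b₂`, `a₂ → b₁` meets since the two paths start and end in crossed position.
-/

/-- One unit step in a positive coordinate direction. -/
def LatticeStep (a b : ℤ × ℤ) : Prop :=
  b = (a.1 + 1, a.2) ∨ b = (a.1, a.2 + 1)

/-- `L` is a lattice path from `p` to `q`, given as the list of visited lattice points. -/
def IsLatticePath (p q : ℤ × ℤ) (L : List (ℤ × ℤ)) : Prop :=
  L.head? = some p ∧ L.getLast? = some q ∧ L.Chain' LatticeStep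

/-- Binomial coefficient on integers, vanishing when the lower index is
negative or exceeds the upper index. -/
def chooseInt (x y : ℤ) : ℤ :=
  if 0 ≤ y ∧ y ≤ x then (Nat.choose x.toNat y.toNat : ℤ) else 0

theorem chooseInt_natCast (n k : ℕ) : chooseInt n k = n.choose k := by
  unfold chooseInt
  split_ifs with h
  · simp
  · rw [Nat.choose_eq_zero_of_lt (by omega), Nat.cast_zero]

theorem chooseInt_of_neg {n k : ℤ} (hk : k < 0) : chooseInt n k = 0 :=
  if_neg (by omega)

theorem chooseInt_nonneg {n k : ℤ} : 0 ≤ chooseInt n k := by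
  unfold chooseInt
  split_ifs <;> positivity

theorem chooseInt_eq_add {n k : ℤ} (hn : 1 ≤ n) :
    chooseInt n k = chooseInt (n - 1) (k - 1) + chooseInt (n - 1) k := by
  obtain ⟨m, rfl⟩ : ∃ m : ℕ, n = (m + 1 : ℕ) := ⟨(n - 1).toNat, by omega⟩
  rw [show ((m + 1 : ℕ) : ℤ) - 1 = m by push_cast; ring]
  rcases lt_trichotomy k 0 with hk | rfl | hk
  · rw [chooseInt_of_neg hk, chooseInt_of_neg hk, chooseInt_of_neg (by omega), add_zero]
  · rw [chooseInt_of_neg (k := 0 - 1) (by norm_num), zero_add, ← Nat.cast_zero,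
      chooseInt_natCast, chooseInt_natCast, Nat.choose_zero_right, Nat.choose_zero_right]
  · obtain ⟨j, rfl⟩ : ∃ j : ℕ, k = (j + 1 : ℕ) := ⟨(k - 1).toNat, by omega⟩
    rw [show ((j + 1 : ℕ) : ℤ) - 1 = j by push_cast; ring, chooseInt_natCast, chooseInt_natCast, chooseInt_natCast, Nat.choose_succ_succ,
      Nat.cast_add]

theorem LatticeStep.le {x y : ℤ × ℤ} (h : LatticeStep x y) : x ≤ y := by
  rcases h with rfl | rfl <;> simp [Prod.le_def]

theorem LatticeStep.fst_add_snd {x y : ℤ × ℤ} (h : LatticeStep x y) :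
    y.1 + y.2 = x.1 + x.2 + 1 := by
  rcases h with rfl | rfl <;> dsimp only <;> ring

section IsLatticePath

variable {p q : ℤ × ℤ} {L : List (ℤ × ℤ)}

theorem isLatticePath_singleton (p : ℤ × ℤ) : IsLatticePath p p [p] :=
  ⟨rfl, rfl, List.isChain_singleton p⟩

theorem IsLatticePath.cons {y : ℤ × ℤ} (hs : LatticeStep p y) (h : IsLatticePath y q L) :
    IsLatticePath p q (p :: L) := by
  obtain ⟨h₁, h₂, h₃⟩ := h
  cases L with
  | nil => simp at h₁
  | cons x L =>
    obtain rfl : x = y := by simpa using h₁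
    exact ⟨rfl, by rwa [List.getLast?_cons_cons], List.IsChain.cons_cons hs h₃⟩

theorem IsLatticePath.eq_singleton_or_cons (h : IsLatticePath p q L) :
    (L = [p] ∧ p = q) ∨
      ∃ y L', L = p :: y :: L' ∧ LatticeStep p y ∧ IsLatticePath y q (y :: L') := by
  obtain ⟨h₁, h₂, h₃⟩ := h
  match L with
  | [] => simp at h₁
  | [x] =>
    simp only [List.head?_cons, List.getLast?_singleton, Option.some.injEq] at h₁ h₂
    exact .inl ⟨h₁ ▸ rfl, h₁ ▸ h₂⟩
  | x :: y :: L' =>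
    obtain rfl : x = p := by simpa using h₁
    rw [List.getLast?_cons_cons] at h₂
    obtain ⟨hs, h₃⟩ := List.isChain_cons_cons.1 h₃
    exact .inr ⟨y, L', rfl, hs, rfl, h₂, h₃⟩

theorem IsLatticePath.head_mem (h : IsLatticePath p q L) : p ∈ L := by
  rcases h.eq_singleton_or_cons with ⟨rfl, -⟩ | ⟨y, L', rfl, -⟩ <;> simp

theorem IsLatticePath.le_of_mem {z : ℤ × ℤ} (h : IsLatticePath p q L) (hz : z ∈ L) :
    p ≤ z ∧ z ≤ q := by
  induction L generalizing p z with
  | nil => simp at hz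
  | cons x M ih =>
    rcases h.eq_singleton_or_cons with ⟨hL, rfl⟩ | ⟨y, L', hL, hs, h'⟩
    · obtain rfl : z = p := by simpa [hL] using hz
      exact ⟨le_rfl, le_rfl⟩
    · obtain ⟨rfl, rfl⟩ := List.cons.inj hL
      rcases List.mem_cons.1 hz with rfl | hz
      · exact ⟨le_rfl, hs.le.trans (ih h' List.mem_cons_self).2⟩
      · exact ⟨hs.le.trans (ih h' hz).1, (ih h' hz).2⟩

theorem IsLatticePath.le (h : IsLatticePath p q L) : p ≤ q :=
  (h.le_of_mem h.head_mem).2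

theorem IsLatticePath.nodup (h : IsLatticePath p q L) : L.Nodup := by
  have hlevel : (L.map fun z => z.1 + z.2).Pairwise (· < ·) :=
    List.isChain_iff_pairwise.1 <| (List.isChain_map _).2 <|
      h.2.2.imp fun _ _ hs => by rw [hs.fst_add_snd]; omega
  exact List.Nodup.of_map _ (hlevel.imp ne_of_lt)

theorem isLatticePath_append_cons_iff {c : ℤ × ℤ} {L₁ L₂ : List (ℤ × ℤ)} :
    IsLatticePath p q (L₁ ++ c :: L₂) ↔
      IsLatticePath p c (L₁ ++ [c]) ∧ IsLatticePath c q (c :: L₂) := by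
  unfold IsLatticePath
  rw [List.Chain', List.Chain', List.Chain', List.isChain_split, List.head?_append,
    List.head?_append, List.getLast?_append, List.getLast?_concat]
  simp only [List.head?_cons, List.getLast?_cons, Option.or_some]
  tauto

end IsLatticePath

def latticePaths (p q : ℤ × ℤ) : Set (List (ℤ × ℤ)) :=
  {L | IsLatticePath p q L}

section LatticePaths

variable {p q : ℤ × ℤ}

theorem latticePaths_eq_empty (h : ¬p ≤ q) : latticePaths p q = ∅ :=
  Set.eq_empty_of_forall_notMem fun _ hL => h hL.le

theorem latticePaths_self (p : ℤ × ℤ) : latticePaths p p = {[p]} := by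
  refine Set.eq_singleton_iff_unique_mem.2 ⟨isLatticePath_singleton p, fun L hL => ?_⟩
  rcases IsLatticePath.eq_singleton_or_cons hL with ⟨rfl, -⟩ | ⟨y, L', -, hs, h'⟩
  · rfl
  · have := hs.fst_add_snd
    have := Prod.le_def.1 h'.le
    omega

theorem latticePaths_eq_image_cons (h : p ≠ q) :
    latticePaths p q =
      List.cons p '' (latticePaths (p.1 + 1, p.2) q ∪ latticePaths (p.1, p.2 + 1) q) := by
  ext L
  constructor
  · intro hL
    rcases IsLatticePath.eq_singleton_or_cons hL with ⟨-, hpq⟩ | ⟨y, L', rfl, hs, h'⟩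
    · exact absurd hpq h
    · refine ⟨y :: L', ?_, rfl⟩
      rcases hs with rfl | rfl
      exacts [.inl h', .inr h']
  · rintro ⟨M, hM | hM, rfl⟩
    exacts [hM.cons (.inl rfl), hM.cons (.inr rfl)]

theorem disjoint_latticePaths_of_ne {p p' : ℤ × ℤ} (h : p ≠ p') :
    Disjoint (latticePaths p q) (latticePaths p' q) :=
  Set.disjoint_left.2 fun _ hL hL' => h (Option.some.inj (hL.1.symm.trans hL'.1))

theorem encard_latticePaths (p q : ℤ × ℤ) :
    (latticePaths p q).encard = (chooseInt (q.1 - p.1 + q.2 - p.2) (q.1 - p.1)).toNat := by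
  by_cases hpq : p = q
  · subst hpq
    simp [latticePaths_self, chooseInt]
  by_cases hle : p ≤ q
  swap
  · rw [latticePaths_eq_empty hle, Set.encard_empty, chooseInt, if_neg]
    · rfl
    · rw [Prod.le_def] at hle
      omega
  have hlevel : p.1 + p.2 < q.1 + q.2 := by
    rw [Prod.le_def] at hle
    rw [Prod.ext_iff] at hpq
    omega
  have hpascal : chooseInt (q.1 - p.1 + q.2 - p.2) (q.1 - p.1) =
      chooseInt (q.1 - (p.1 + 1) + q.2 - p.2) (q.1 - (p.1 + 1)) +
        chooseInt (q.1 - p.1 + q.2 - (p.2 + 1)) (q.1 - p.1) := by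
    rw [chooseInt_eq_add (by omega)]
    congr 2 <;> ring
  rw [latticePaths_eq_image_cons hpq, List.cons_injective.encard_image,
    Set.encard_union_eq (disjoint_latticePaths_of_ne (by simp)),
    encard_latticePaths, encard_latticePaths, hpascal,
    Int.toNat_add chooseInt_nonneg chooseInt_nonneg, Nat.cast_add]
termination_by (q.1 + q.2 - p.1 - p.2).toNat
decreasing_by all_goals omega

theorem finite_latticePaths (p q : ℤ × ℤ) : (latticePaths p q).Finite :=
  Set.finite_of_encard_eq_coe (encard_latticePaths p q)

theorem ncard_latticePaths (p q : ℤ × ℤ) :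
    ((latticePaths p q).ncard : ℤ) = chooseInt (q.1 - p.1 + q.2 - p.2) (q.1 - p.1) := by
  rw [Set.ncard_def, encard_latticePaths, ENat.toNat_natCast, Int.toNat_of_nonneg chooseInt_nonneg]

end LatticePaths

-- Advance `A` while it is strictly west of `B`'s start, otherwise `B`, which is then strictly
-- south of `A`'s start; either way the crossed position of the endpoints is preserved.
theorem IsLatticePath.exists_mem_mem {p q r s : ℤ × ℤ} {A B : List (ℤ × ℤ)}
    (hA : IsLatticePath p q A) (hB : IsLatticePath r s B)
    (h₁ : p.1 ≤ r.1) (h₂ : r.2 ≤ p.2) (h₃ : s.1 ≤ q.1) (h₄ : q.2 ≤ s.2) :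
    ∃ z ∈ A, z ∈ B := by
  by_cases hpr : p = r
  · exact ⟨p, hA.head_mem, hpr ▸ hB.head_mem⟩
  have hrs := Prod.le_def.1 hB.le
  rcases h₁.lt_or_eq with h₁ | h₁
  · rcases hA.eq_singleton_or_cons with ⟨-, rfl⟩ | ⟨y, A', rfl, hy, hA'⟩
    · omega
    · have := hy.fst_add_snd
      have := Prod.le_def.1 hy.le
      obtain ⟨z, hz, hzB⟩ := IsLatticePath.exists_mem_mem hA' hB (by omega) (by omega) h₃ h₄
      exact ⟨z, List.mem_cons_of_mem p hz, hzB⟩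
  · have h₂ : r.2 < p.2 := h₂.lt_of_ne fun h => hpr (Prod.ext h₁ h.symm)
    rcases hB.eq_singleton_or_cons with ⟨-, rfl⟩ | ⟨y, B', rfl, hy, hB'⟩
    · have := Prod.le_def.1 hA.le
      omega
    · have := hy.fst_add_snd
      have := Prod.le_def.1 hy.le
      obtain ⟨z, hz, hzB⟩ := IsLatticePath.exists_mem_mem hA hB' (by omega) (by omega) h₃ h₄
      exact ⟨z, hz, List.mem_cons_of_mem r hzB⟩
termination_by A.length + B.length

namespace List

variable {α : Type*} [DecidableEq α]

def tailSwap (A B : List α) : List α × List α :=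
  match A.find? (· ∈ B) with
  | none => (A, B)
  | some c =>
    (A.takeWhile (· ≠ c) ++ B.dropWhile (· ≠ c), B.takeWhile (· ≠ c) ++ A.dropWhile (· ≠ c))

theorem tailSwap_append_cons {A₁ A₂ B₁ B₂ : List α} {c : α}
    (hA₁ : ∀ x ∈ A₁, x ∉ B₁ ++ c :: B₂) (hc : c ∉ B₁) :
    tailSwap (A₁ ++ c :: A₂) (B₁ ++ c :: B₂) = (A₁ ++ c :: B₂, B₁ ++ c :: A₂) := by
  have hA₁c : ∀ x ∈ A₁, x ≠ c := fun x hx h => hA₁ x hx (h ▸ by simp)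
  have hB₁c : ∀ x ∈ B₁, x ≠ c := fun x hx h => hc (h ▸ hx)
  have hfind : (A₁ ++ c :: A₂).find? (· ∈ B₁ ++ c :: B₂) = some c := by
    rw [List.find?_append, List.find?_eq_none.2 fun x hx => by simpa using hA₁ x hx,
      Option.none_or, List.find?_cons_of_pos (by simp)]
  simp only [tailSwap, hfind]
  rw [List.takeWhile_append_of_pos (l₁ := A₁) (by simpa using hA₁c),
    List.takeWhile_append_of_pos (l₁ := B₁) (by simpa using hB₁c),
    List.dropWhile_append_of_pos (l₁ := A₁) (by simpa using hA₁c),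
    List.dropWhile_append_of_pos (l₁ := B₁) (by simpa using hB₁c)]
  simp

theorem exists_append_cons_of_mem_of_mem {A B : List α} {z : α} (hA : z ∈ A) (hB : z ∈ B) :
    ∃ A₁ c A₂ B₁ B₂, A = A₁ ++ c :: A₂ ∧ B = B₁ ++ c :: B₂ ∧ (∀ x ∈ A₁, x ∉ B) ∧ c ∉ B₁ := by
  obtain ⟨c, hc⟩ : ∃ c, A.find? (· ∈ B) = some c :=
    Option.isSome_iff_exists.1 (List.find?_isSome.2 ⟨z, hA, by simpa using hB⟩)
  obtain ⟨hcB, A₁, A₂, rfl, hA₁⟩ := List.find?_eq_some_iff_append.1 hc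
  obtain ⟨B₁, B₂, hcB₁, rfl, -⟩ := List.exists_erase_eq (by simpa using hcB)
  exact ⟨A₁, c, A₂, B₁, B₂, rfl, rfl, by simpa using hA₁, hcB₁⟩

end List

def meetingPairs (p q r s : ℤ × ℤ) : Set (List (ℤ × ℤ) × List (ℤ × ℤ)) :=
  {P | IsLatticePath p q P.1 ∧ IsLatticePath r s P.2 ∧ ∃ z ∈ P.1, z ∈ P.2}

section MeetingPairs

variable {p q r s : ℤ × ℤ}

theorem tailSwap_mem_meetingPairs {P : List (ℤ × ℤ) × List (ℤ × ℤ)}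
    (hP : P ∈ meetingPairs p q r s) :
    P.1.tailSwap P.2 ∈ meetingPairs p s r q ∧
      (P.1.tailSwap P.2).1.tailSwap (P.1.tailSwap P.2).2 = P := by
  obtain ⟨A, B⟩ := P
  obtain ⟨hA, hB, z, hzA, hzB⟩ := hP
  obtain ⟨A₁, c, A₂, B₁, B₂, rfl, rfl, hA₁, hc⟩ := List.exists_append_cons_of_mem_of_mem hzA hzB
  have hA₁' : ∀ x ∈ A₁, x ∉ B₁ ++ c :: A₂ := by
    intro x hx hmem
    rcases List.mem_append.1 hmem with h | h
    · exact hA₁ x hx (List.mem_append_left _ h)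
    · exact List.disjoint_of_nodup_append hA.nodup hx h
  rw [isLatticePath_append_cons_iff] at hA hB
  rw [List.tailSwap_append_cons hA₁ hc, List.tailSwap_append_cons hA₁' hc]
  exact ⟨⟨isLatticePath_append_cons_iff.2 ⟨hA.1, hB.2⟩,
    isLatticePath_append_cons_iff.2 ⟨hB.1, hA.2⟩, c, by simp, by simp⟩, rfl⟩

theorem bijOn_tailSwap_meetingPairs :
    Set.BijOn (Function.uncurry List.tailSwap) (meetingPairs p q r s) (meetingPairs p s r q) :=
  Set.InvOn.bijOn ⟨fun _ hP => (tailSwap_mem_meetingPairs hP).2,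
    fun _ hP => (tailSwap_mem_meetingPairs hP).2⟩
    (fun _ hP => (tailSwap_mem_meetingPairs hP).1) (fun _ hP => (tailSwap_mem_meetingPairs hP).1)

end MeetingPairs

theorem ncard_disjoint_latticePaths {p q r s : ℤ × ℤ}
    (h₁ : p.1 ≤ r.1) (h₂ : r.2 ≤ p.2) (h₃ : q.1 ≤ s.1) (h₄ : s.2 ≤ q.2) :
    ({P : List (ℤ × ℤ) × List (ℤ × ℤ) |
        IsLatticePath p q P.1 ∧ IsLatticePath r s P.2 ∧ ∀ x ∈ P.1, x ∉ P.2}.ncard : ℤ) =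
      (latticePaths p q).ncard * (latticePaths r s).ncard -
        (latticePaths p s).ncard * (latticePaths r q).ncard := by
  set D := {P : List (ℤ × ℤ) × List (ℤ × ℤ) |
    IsLatticePath p q P.1 ∧ IsLatticePath r s P.2 ∧ ∀ x ∈ P.1, x ∉ P.2}
  have hsplit : latticePaths p q ×ˢ latticePaths r s = D ∪ meetingPairs p q r s := by
    ext ⟨A, B⟩
    simp only [latticePaths, meetingPairs, D, Set.mem_prod, Set.mem_union, Set.mem_ofPred_eq]
    by_cases hmeet : ∃ z ∈ A, z ∈ B <;> simp_all
  have hdisj : Disjoint D (meetingPairs p q r s) := Set.disjoint_left.2 fun _ hD hM => by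
    obtain ⟨z, hz, hz'⟩ := hM.2.2
    exact hD.2.2 z hz hz'
  have hcross : meetingPairs p s r q = latticePaths p s ×ˢ latticePaths r q := by
    ext ⟨A, B⟩
    exact ⟨fun h => ⟨h.1, h.2.1⟩, fun h => ⟨h.1, h.2, h.1.exists_mem_mem h.2 h₁ h₂ h₃ h₄⟩⟩
  have hfin := (finite_latticePaths p q).prod (finite_latticePaths r s)
  rw [hsplit] at hfin
  have hcard := Set.ncard_union_eq hdisj (hfin.subset Set.subset_union_left)
    (hfin.subset Set.subset_union_right)
  rw [← hsplit, Set.ncard_prod, bijOn_tailSwap_meetingPairs.ncard_eq, hcross,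
    Set.ncard_prod] at hcard
  rw [eq_sub_iff_add_eq]
  exact_mod_cast hcard.symm

theorem stmt_14 (a₁ a₂ a₁' a₂' b₁ b₂ b₁' b₂' : ℤ)
    (ha : a₁ ≤ a₂) (ha' : a₂' ≤ a₁') (hb : b₁ ≤ b₂) (hb' : b₂' ≤ b₁') :
    (({p : List (ℤ × ℤ) × List (ℤ × ℤ) |
        IsLatticePath (a₁, a₁') (b₁, b₁') p.1 ∧
        IsLatticePath (a₂, a₂') (b₂, b₂') p.2 ∧
        ∀ x ∈ p.1, x ∉ p.2}).ncard : ℤ)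
      = Matrix.det
          !![chooseInt (b₁ - a₁ + b₁' - a₁') (b₁ - a₁),
              chooseInt (b₂ - a₁ + b₂' - a₁') (b₂ - a₁);
            chooseInt (b₁ - a₂ + b₁' - a₂') (b₁ - a₂),
              chooseInt (b₂ - a₂ + b₂' - a₂') (b₂ - a₂)] := by
  rw [ncard_disjoint_latticePaths ha ha' hb hb', Matrix.det_fin_two_of]
  simp only [ncard_latticePaths]
end
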